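/- arXiv:1301.7714 — 2 statements merged into one kernel-verified Lean document; each statement's English description precedes it below -/
import Mathlib

section
/- For all integers n ≥ 2, 0 ≤ k ≤ n−2 and p ≥ 0, the following identity holds in ℤ: NO(n,k,p) = NO(n−1,k,p) + 2·NE(n−1,k,p) + 2·N(n−1,k−1,p) − 2·N(n−1,k,p) + NO(n−1,k,p−1), where N(n−1,−1,p) = 0 and NO(n−1,k,−1) = 0. -/
/-- The x-coordinate (number of East steps) of the lattice path `P` after `m` steps. -/
def latticePos {n : ℕ} (P : Fin n → Bool) (m : ℕ) : ℕ :=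
  (Finset.univ.filter (fun i : Fin n => (i : ℕ) < m ∧ P i = true)).card

/-- The number of intersections of paths `P` and `Q` (common lattice points with
coordinate sum strictly between `0` and `n`). -/
def latticeInter {n : ℕ} (P Q : Fin n → Bool) : ℕ :=
  ((Finset.Ioo 0 n).filter (fun m => latticePos P m = latticePos Q m)).card

/-- Number of ordered pairs of lattice paths of length `n`, ending at `(r, n-r)` and
`(s, n-s)` respectively, intersecting exactly `k` times (natural-number version). -/
def Mnat (n k r s : ℕ) : ℕ :=
  (Finset.univ.filter (fun PQ : (Fin n → Bool) × (Fin n → Bool) =>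
      latticePos PQ.1 n = r ∧ latticePos PQ.2 n = s ∧ latticeInter PQ.1 PQ.2 = k)).card

/-- `M n k r s`, extended by zero to integer arguments. -/
def M (n k r s : ℤ) : ℤ :=
  if 0 ≤ n ∧ 0 ≤ k ∧ 0 ≤ r ∧ 0 ≤ s then Mnat n.toNat k.toNat r.toNat s.toNat else 0

/-- `N n k r = M n k r r`. -/
def N (n k r : ℤ) : ℤ := M n k r r

/-- `NE n k p = Σ_{r+s=2p, 0 ≤ r,s ≤ n} M n k r s`. -/
noncomputable def NE (n k p : ℤ) : ℤ := ∑ r ∈ Finset.Icc (0 : ℤ) n, M n k r (2 * p - r)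

/-- `NO n k p = Σ_{r+s=2p+1, 0 ≤ r,s ≤ n} M n k r s`. -/
noncomputable def NO (n k p : ℤ) : ℤ := ∑ r ∈ Finset.Icc (0 : ℤ) n, M n k r (2 * p + 1 - r)

/-- Binomial coefficient for integer arguments (zero unless both are nonnegative). -/
def ichoose (a b : ℤ) : ℤ :=
  if 0 ≤ a ∧ 0 ≤ b then (a.toNat).choose b.toNat else 0

/-!
Split off the last step of both paths. A pair of paths of length `n` ending at `(r, s)` comes from
a pair of length `n - 1` ending at `(r - b, s - c)` with `b, c ∈ {0, 1}`, and gains one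
intersection exactly when those two endpoints coincide; for `n ≥ 2` that point is interior.
When `r + s = 2p + 1` is odd, the endpoints can coincide only if exactly one path drops an East
step. Summed over `r`, the terms with `b = c` give `NO(n-1,k,p)` and `NO(n-1,k,p-1)`, and each of
the two mixed terms gives `NE(n-1,k,p)`, corrected at the diagonal point `(p, p)` by
`N(n-1,k-1,p) - N(n-1,k,p)`.
-/

open Finset

section LatticePaths

variable {n : ℕ}

lemma latticePos_le (P : Fin n → Bool) (m : ℕ) : latticePos P m ≤ n :=
  (card_filter_le _ _).trans (card_fin n).le

lemma latticePos_snoc_of_le (P : Fin n → Bool) (b : Bool) {m : ℕ} (hm : m ≤ n) :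
    latticePos (Fin.snoc P b) m = latticePos P m := by
  simp only [latticePos, card_filter, Fin.sum_univ_castSucc, Fin.snoc_castSucc,
    Fin.val_castSucc, Fin.val_last, Fin.snoc_last]
  rw [if_neg (by omega), add_zero]

lemma latticePos_snoc_self (P : Fin n → Bool) (b : Bool) :
    latticePos (Fin.snoc P b) (n + 1) = latticePos P n + b.toNat := by
  simp only [latticePos, card_filter, Fin.sum_univ_castSucc, Fin.snoc_castSucc,
    Fin.snoc_last, Fin.is_lt, true_and]
  cases b <;> rfl

lemma latticeInter_snoc (hn : n ≠ 0) (P Q : Fin n → Bool) (b c : Bool) :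
    latticeInter (Fin.snoc P b) (Fin.snoc Q c) =
      latticeInter P Q + if latticePos P n = latticePos Q n then 1 else 0 := by
  have hIoo : Ioo 0 (n + 1) = insert n (Ioo 0 n) := by
    ext x; simp only [mem_Ioo, mem_insert]; omega
  have hprefix : (Ioo 0 n).filter
      (fun m => latticePos (Fin.snoc P b) m = latticePos (Fin.snoc Q c) m) =
      (Ioo 0 n).filter (fun m => latticePos P m = latticePos Q m) :=
    filter_congr fun m hm => by
      rw [latticePos_snoc_of_le P b (mem_Ioo.1 hm).2.le,
        latticePos_snoc_of_le Q c (mem_Ioo.1 hm).2.le]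
  rw [latticeInter, latticeInter, hIoo, filter_insert, latticePos_snoc_of_le P b le_rfl,
    latticePos_snoc_of_le Q c le_rfl, hprefix]
  split_ifs
  · exact card_insert_of_notMem (by simp)
  · rfl

end LatticePaths

lemma M_natCast_eq_sum (n : ℕ) (k r s : ℤ) :
    M n k r s = ∑ P : Fin n → Bool, ∑ Q : Fin n → Bool,
      if (latticePos P n : ℤ) = r ∧ (latticePos Q n : ℤ) = s ∧ (latticeInter P Q : ℤ) = k
      then 1 else 0 := by
  rw [M]
  split_ifs with h
  · obtain ⟨-, hk, hr, hs⟩ := h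
    lift k to ℕ using hk
    lift r to ℕ using hr
    lift s to ℕ using hs
    simp only [Int.toNat_natCast, Nat.cast_inj, Mnat, card_filter, Nat.cast_sum,
      Fintype.sum_prod_type, Nat.cast_ite, Nat.cast_one, Nat.cast_zero]
  · refine (Fintype.sum_eq_zero _ fun P => Fintype.sum_eq_zero _ fun Q => if_neg ?_).symm
    omega

lemma M_eq_zero_of_notMem_Icc {n k r s : ℤ} (hr : r ∉ Icc 0 n) : M n k r s = 0 := by
  rcases lt_or_ge n 0 with hn | hn
  · exact if_neg (by omega)
  lift n to ℕ using hn
  rw [M_natCast_eq_sum]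
  refine Fintype.sum_eq_zero _ fun P => Fintype.sum_eq_zero _ fun Q => if_neg ?_
  have := latticePos_le P n
  rw [mem_Icc] at hr
  omega

lemma M_eq_sum_last_step {n : ℤ} (hn : 2 ≤ n) (k r s : ℤ) :
    M n k r s = ∑ b : Bool, ∑ c : Bool,
      M (n - 1) (k - if r - b.toNat = s - c.toNat then 1 else 0) (r - b.toNat) (s - c.toNat) := by
  obtain ⟨n, rfl⟩ : ∃ m : ℕ, n = m + 1 := ⟨(n - 1).toNat, by omega⟩
  have hsnoc : ∀ b P c Q, ((latticePos (Fin.snoc P b : Fin (n + 1) → Bool) (n + 1) : ℤ) = r ∧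
      (latticePos (Fin.snoc Q c : Fin (n + 1) → Bool) (n + 1) : ℤ) = s ∧
      (latticeInter (Fin.snoc P b : Fin (n + 1) → Bool) (Fin.snoc Q c) : ℤ) = k) ↔
      ((latticePos P n : ℤ) = r - b.toNat ∧ (latticePos Q n : ℤ) = s - c.toNat ∧
      (latticeInter P Q : ℤ) = k - if r - b.toNat = s - c.toNat then 1 else 0) := by
    intro b P c Q
    rw [latticePos_snoc_self, latticePos_snoc_self, latticeInter_snoc (by omega)]
    push_cast
    split_ifs <;> omega
  rw [add_sub_cancel_right, ← Nat.cast_succ, M_natCast_eq_sum]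
  simp only [M_natCast_eq_sum, ← (Fin.snocEquiv fun _ => Bool).sum_comp, Fintype.sum_prod_type]
  refine Fintype.sum_congr _ _ fun b => ?_
  rw [Finset.sum_comm]
  exact Fintype.sum_congr _ _ fun c => Fintype.sum_congr _ _ fun P =>
    Fintype.sum_congr _ _ fun Q => if_congr (hsnoc b P c Q) rfl rfl

lemma sum_Icc_comp_sub {β : Type*} [AddCommMonoid β] (f : ℤ → β) (a b c : ℤ) :
    ∑ r ∈ Icc a b, f (r - c) = ∑ r ∈ Icc (a - c) (b - c), f r := by
  simp only [sub_eq_add_neg, ← map_add_right_Icc, sum_map, addRightEmbedding_apply]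

lemma sum_M_eq_of_Icc_subset {n : ℤ} {I : Finset ℤ} (h : Icc 0 n ⊆ I) (κ σ : ℤ → ℤ) :
    ∑ r ∈ Icc 0 n, M n (κ r) r (σ r) = ∑ r ∈ I, M n (κ r) r (σ r) :=
  sum_subset h fun _ _ hr => M_eq_zero_of_notMem_Icc hr

lemma sum_M_sub_ite_eq {n : ℤ} {I : Finset ℤ} (h : Icc 0 n ⊆ I) (k p : ℤ) :
    ∑ r ∈ I, M n (k - if r = p then 1 else 0) r (2 * p - r) =
      NE n k p + N n (k - 1) p - N n k p := by
  have hterm : ∀ r, M n (k - if r = p then 1 else 0) r (2 * p - r) =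
      M n k r (2 * p - r) + if r = p then N n (k - 1) p - N n k p else 0 := by
    intro r
    split_ifs with hr
    · rw [hr, N, N, two_mul, add_sub_cancel_right]
      ring
    · rw [sub_zero, add_zero]
  rw [sum_congr rfl fun r _ => hterm r, sum_add_distrib, sum_ite_eq',
    NE, sum_M_eq_of_Icc_subset h (fun _ => k) (fun r => 2 * p - r)]
  split_ifs with hp
  · ring
  · have hp' : p ∉ Icc 0 n := fun hp' => hp (h hp')
    rw [N, N, M_eq_zero_of_notMem_Icc hp', M_eq_zero_of_notMem_Icc hp']
    ring

theorem NO_recurrence_general (n k p : ℤ) (hn : 2 ≤ n) :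
    NO n k p =
      NO (n - 1) k p + 2 * NE (n - 1) k p + 2 * N (n - 1) (k - 1) p -
        2 * N (n - 1) k p + NO (n - 1) k (p - 1) := by
  let D r := M (n - 1) (k - if r = p then 1 else 0) r (2 * p - r)
  have hsplit : ∀ r, M n k r (2 * p + 1 - r) = M (n - 1) k r (2 * p + 1 - r) + D r +
      D (r - 1) + M (n - 1) k (r - 1) (2 * (p - 1) + 1 - (r - 1)) := by
    intro r
    rw [M_eq_sum_last_step hn]
    simp only [Fintype.sum_bool, Bool.toNat_true, Bool.toNat_false, D]
    push_cast
    split_ifs <;> first | omega | ring_nf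
  have hIcc : Icc 0 (n - 1) ⊆ Icc 0 n := Icc_subset_Icc le_rfl (by omega)
  have hIcc' : Icc 0 (n - 1) ⊆ Icc (0 - 1) (n - 1) := Icc_subset_Icc (by omega) le_rfl
  rw [NO, sum_congr rfl fun r _ => hsplit r, sum_add_distrib, sum_add_distrib, sum_add_distrib,
    sum_Icc_comp_sub D, sum_Icc_comp_sub (fun r => M (n - 1) k r (2 * (p - 1) + 1 - r)),
    sum_M_sub_ite_eq hIcc, sum_M_sub_ite_eq hIcc', NO, NO,
    sum_M_eq_of_Icc_subset hIcc (fun _ => k) (fun r => 2 * p + 1 - r),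
    sum_M_eq_of_Icc_subset hIcc' (fun _ => k) (fun r => 2 * (p - 1) + 1 - r)]
  ring

/-- The recurrence for `NO(n,k,p)`, where `N(n−1,−1,p) = 0` and `NO(n−1,k,−1) = 0`. -/
theorem NO_recurrence (n k p : ℤ) (hn : 2 ≤ n) (hk : 0 ≤ k) (hkn : k ≤ n - 2)
    (hp : 0 ≤ p) :
    NO n k p =
      NO (n - 1) k p + 2 * NE (n - 1) k p + 2 * N (n - 1) (k - 1) p -
        2 * N (n - 1) k p + NO (n - 1) k (p - 1) :=
  NO_recurrence_general n k p hn
end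

section
/- For all integers k ≥ 1, j ≥ 1, n ≥ 1 and r ≥ 0, one has M(n,k,r,r+j) = Σ N(n_0, k−1, r_0) · ∏_{i=1}^{j} M(n_i, 0, r_i, r_i+1), where the sum is over all (j+1)-tuples (n_0, n_1,…,n_j) of positive integers with n_0+n_1+⋯+n_j = n and all (j+1)-tuples (r_0, r_1,…,r_j) of nonnegative integers with r_0+r_1+⋯+r_j = r. -/
/-!
Let the gap of a pair `(P, Q)` after `m` steps be the number of East steps of `Q` minus that
of `P`: it changes by at most one per step, and the paths meet where it vanishes. If `Q` ends
`j` steps East of `P` and `v < j`, cutting the pair at the last time its gap is at most `v`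
(where it is then exactly `v`) is a bijection onto pairs consisting of a pair of positive length
ending at gap `v`, followed by a pair that never meets and ends at gap `j - v`; the cut point is
an intersection iff `v = 0`. Cutting once at gap `0` (possible since `k ≥ 1`), then repeatedly
at gap `1`, gives the decomposition.
-/

open Finset

section Paths

variable {n : ℕ}

lemma latticePos_zero (P : Fin n → Bool) : latticePos P 0 = 0 := by
  simp [latticePos]

lemma latticePos_mono (P : Fin n → Bool) : Monotone (latticePos P) := fun _ _ h =>
  card_le_card fun _ => by
    simp only [mem_filter]
    exact fun ⟨hu, hi, hP⟩ => ⟨hu, hi.trans_le h, hP⟩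

lemma latticePos_succ_le (P : Fin n → Bool) (m : ℕ) :
    latticePos P (m + 1) ≤ latticePos P m + 1 := by
  have hsplit : univ.filter (fun i : Fin n => (i : ℕ) < m + 1 ∧ P i = true) ⊆
      univ.filter (fun i : Fin n => (i : ℕ) < m ∧ P i = true) ∪
        univ.filter (fun i : Fin n => (i : ℕ) = m) := fun i => by
    simp only [mem_filter, mem_union, mem_univ, true_and]
    rintro ⟨hi, hP⟩
    exact (Nat.lt_succ_iff_lt_or_eq.1 hi).imp (⟨·, hP⟩) id
  have hsingle : #(univ.filter (fun i : Fin n => (i : ℕ) = m)) ≤ 1 :=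
    card_le_one.2 fun i hi i' hi' => Fin.ext <| by simp_all
  exact (card_le_card hsplit).trans <| (card_union_le _ _).trans <| by unfold latticePos; omega

lemma latticePos_of_le (P : Fin n → Bool) {m : ℕ} (h : n ≤ m) :
    latticePos P m = latticePos P n :=
  congrArg card <| filter_congr fun i _ => by
    have := i.isLt
    simp only [and_congr_left_iff]
    omega

lemma latticePos_append {t u : ℕ} (P₁ : Fin t → Bool) (P₂ : Fin u → Bool) (m : ℕ) :
    latticePos (Fin.append P₁ P₂) m = latticePos P₁ m + latticePos P₂ (m - t) := by
  simp only [latticePos, card_filter, Fin.sum_univ_add, Fin.append_left, Fin.append_right,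
    Fin.val_castAdd, Fin.val_natAdd]
  congr 1
  exact sum_congr rfl fun i _ => by congr 1; simp only [eq_iff_iff, and_congr_left_iff]; omega

lemma latticePos_append_left {t u : ℕ} (P₁ : Fin t → Bool) (P₂ : Fin u → Bool) :
    latticePos (Fin.append P₁ P₂) t = latticePos P₁ t := by
  rw [latticePos_append, Nat.sub_self, latticePos_zero, add_zero]

lemma latticePos_append_end {t u : ℕ} (P₁ : Fin t → Bool) (P₂ : Fin u → Bool) :
    latticePos (Fin.append P₁ P₂) (t + u) = latticePos P₁ t + latticePos P₂ u := by
  rw [latticePos_append, latticePos_of_le P₁ (Nat.le_add_right t u), Nat.add_sub_cancel_left]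

end Paths

section Gap

variable {n : ℕ}

def latticeGap (P Q : Fin n → Bool) (m : ℕ) : ℤ := latticePos Q m - latticePos P m

lemma latticeGap_zero (P Q : Fin n → Bool) : latticeGap P Q 0 = 0 := by
  simp [latticeGap, latticePos_zero]

lemma latticeGap_succ_le (P Q : Fin n → Bool) (m : ℕ) :
    latticeGap P Q (m + 1) ≤ latticeGap P Q m + 1 := by
  have := latticePos_succ_le Q m
  have := latticePos_mono P (Nat.le_add_right m 1)
  unfold latticeGap; omega

lemma latticeInter_eq_card (P Q : Fin n → Bool) :
    latticeInter P Q = #{m ∈ Ioo 0 n | latticeGap P Q m = 0} :=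
  congrArg card <| filter_congr fun m _ => by
    simp only [latticeGap, sub_eq_zero, Nat.cast_inj, eq_comm]

lemma latticeInter_eq_zero_iff (P Q : Fin n → Bool) :
    latticeInter P Q = 0 ↔ ∀ m, 0 < m → m < n → latticeGap P Q m ≠ 0 := by
  simp [latticeInter_eq_card, filter_eq_empty_iff]

lemma latticeGap_pos_of_latticeInter_eq_zero {P Q : Fin n → Bool} (hI : latticeInter P Q = 0)
    (hn : 0 < latticeGap P Q n) {m : ℕ} (hm : 0 < m) (hmn : m ≤ n) : 0 < latticeGap P Q m := by
  revert hm
  induction hmn using Nat.decreasingInduction with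
  | self => exact fun _ => hn
  | of_succ m hmn ih =>
    intro hm
    have := latticeGap_succ_le P Q m
    have := (latticeInter_eq_zero_iff P Q).1 hI m hm hmn
    have := ih m.succ_pos
    omega

section Append

variable {t u : ℕ} (P₁ Q₁ : Fin t → Bool) (P₂ Q₂ : Fin u → Bool)

lemma latticeGap_append_of_le {m : ℕ} (hm : m ≤ t) :
    latticeGap (Fin.append P₁ P₂) (Fin.append Q₁ Q₂) m = latticeGap P₁ Q₁ m := by
  simp [latticeGap, latticePos_append, Nat.sub_eq_zero_of_le hm, latticePos_zero]

lemma latticeGap_append_add (m : ℕ) :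
    latticeGap (Fin.append P₁ P₂) (Fin.append Q₁ Q₂) (t + m) =
      latticeGap P₁ Q₁ t + latticeGap P₂ Q₂ m := by
  simp only [latticeGap, latticePos_append, latticePos_of_le _ (Nat.le_add_right t m),
    Nat.add_sub_cancel_left]
  push_cast; ring

lemma latticeInter_append (ht : 0 < t) (hu : 0 < u) (hgap₁ : 0 ≤ latticeGap P₁ Q₁ t)
    (hgap₂ : ∀ m, 0 < m → m < u → 0 < latticeGap P₂ Q₂ m) :
    latticeInter (Fin.append P₁ P₂) (Fin.append Q₁ Q₂) =
      latticeInter P₁ Q₁ + if latticeGap P₁ Q₁ t = 0 then 1 else 0 := by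
  have hzeros :
      {m ∈ Ioo 0 (t + u) | latticeGap (Fin.append P₁ P₂) (Fin.append Q₁ Q₂) m = 0} =
        {m ∈ Ioc 0 t | latticeGap P₁ Q₁ m = 0} := by
    ext m
    simp only [mem_filter, mem_Ioo, mem_Ioc]
    rcases le_or_gt m t with hm | hm
    · rw [latticeGap_append_of_le _ _ _ _ hm]
      omega
    · obtain ⟨m, rfl⟩ := Nat.exists_eq_add_of_lt hm
      have := hgap₂ (m + 1) m.succ_pos
      rw [add_assoc, latticeGap_append_add]
      omega
  rw [latticeInter_eq_card, hzeros, ← Ioo_insert_right ht, filter_insert, latticeInter_eq_card]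
  split_ifs with h
  · exact card_insert_of_notMem (by simp)
  · rfl

end Append

end Gap

section LastPassage

variable {n : ℕ} (v : ℕ) (P Q : Fin n → Bool)

def lastPassage : ℕ := Nat.findGreatest (fun m => latticeGap P Q m ≤ v) n

lemma lastPassage_le : lastPassage v P Q ≤ n := Nat.findGreatest_le n

variable {v P Q}

lemma lastPassage_eq_iff (hv : v < latticeGap P Q n) {t : ℕ} :
    lastPassage v P Q = t ↔
      t ≤ n ∧ latticeGap P Q t = v ∧ ∀ m, t < m → m ≤ n → v < latticeGap P Q m := by
  simp only [lastPassage, Nat.findGreatest_eq_iff, not_le]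
  refine ⟨fun ⟨htn, hle, hgt⟩ => ⟨htn, ?_, hgt⟩,
    fun ⟨htn, heq, hgt⟩ => ⟨htn, fun _ => heq.le, hgt⟩⟩
  have hgap_t : latticeGap P Q t ≤ v := by
    rcases eq_or_ne t 0 with rfl | ht
    · simp [latticeGap_zero]
    · exact hle ht
  have htn' : t < n := htn.lt_of_ne (by rintro rfl; omega)
  have := hgt (Nat.lt_add_one t) htn'
  have := latticeGap_succ_le P Q t
  omega

lemma lastPassage_pos (hv : v < latticeGap P Q n) (hI : v = 0 → latticeInter P Q ≠ 0) :
    0 < lastPassage v P Q := by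
  refine Nat.findGreatest_pos.2 ?_
  rcases eq_or_ne v 0 with rfl | hv0
  · obtain ⟨m, hm, hmn, hgap⟩ : ∃ m, 0 < m ∧ m < n ∧ latticeGap P Q m = 0 := by
      by_contra! h
      exact hI rfl ((latticeInter_eq_zero_iff P Q).2 h)
    exact ⟨m, hm, hmn.le, hgap.le⟩
  · have hn : n ≠ 0 := by rintro rfl; rw [latticeGap_zero] at hv; omega
    have := latticeGap_succ_le P Q 0
    rw [zero_add, latticeGap_zero] at this
    exact ⟨1, one_pos, by omega, by omega⟩

end LastPassage

section Cut

def pathPairs (n k r s : ℕ) : Finset ((Fin n → Bool) × (Fin n → Bool)) :=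
  univ.filter fun PQ =>
    latticePos PQ.1 n = r ∧ latticePos PQ.2 n = s ∧ latticeInter PQ.1 PQ.2 = k

lemma Mnat_eq_card (n k r s : ℕ) : Mnat n k r s = #(pathPairs n k r s) := rfl

lemma card_eq_mul_of_append_mem_iff {t u : ℕ}
    (s : Finset ((Fin (t + u) → Bool) × (Fin (t + u) → Bool)))
    (s₁ : Finset ((Fin t → Bool) × (Fin t → Bool)))
    (s₂ : Finset ((Fin u → Bool) × (Fin u → Bool)))
    (h : ∀ x y, (Fin.append x.1 y.1, Fin.append x.2 y.2) ∈ s ↔ x ∈ s₁ ∧ y ∈ s₂) :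
    #s = #s₁ * #s₂ := by
  rw [← card_product]
  exact (card_equiv ((Equiv.prodProdProdComm _ _ _ _).trans
    ((Fin.appendEquiv t u).prodCongr (Fin.appendEquiv t u))) fun x => by
    rw [mem_product]; exact (h x.1 x.2).symm).symm

variable {t u v : ℕ} {P₁ Q₁ : Fin t → Bool} {P₂ Q₂ : Fin u → Bool}

lemma lastPassage_append_eq_iff (hv : v < latticeGap P₁ Q₁ t + latticeGap P₂ Q₂ u) :
    lastPassage v (Fin.append P₁ P₂) (Fin.append Q₁ Q₂) = t ↔
      latticeGap P₁ Q₁ t = v ∧ ∀ m, 0 < m → m ≤ u → 0 < latticeGap P₂ Q₂ m := by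
  rw [lastPassage_eq_iff (by rwa [latticeGap_append_add]),
    latticeGap_append_of_le _ _ _ _ le_rfl]
  refine ⟨fun ⟨_, hgap₁, hafter⟩ => ⟨hgap₁, fun m hm hmu => ?_⟩,
    fun ⟨hgap₁, hgap₂⟩ => ⟨Nat.le_add_right t u, hgap₁, fun m htm hmn => ?_⟩⟩
  · have := hafter (t + m) (by omega) (by omega)
    rw [latticeGap_append_add] at this
    omega
  · obtain ⟨m, rfl⟩ := Nat.exists_eq_add_of_lt htm
    have := hgap₂ (m + 1) m.succ_pos (by omega)
    rw [add_assoc, latticeGap_append_add]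
    omega

lemma append_mem_pathPairs_iff {j k k₀ r₀ r₁ : ℕ} (ht : 0 < t) (hvj : v < j)
    (hk : k = k₀ + if v = 0 then 1 else 0) :
    ((Fin.append P₁ P₂, Fin.append Q₁ Q₂) ∈
          pathPairs (t + u) k (r₀ + r₁) (r₀ + r₁ + j) ∧
        lastPassage v (Fin.append P₁ P₂) (Fin.append Q₁ Q₂) = t ∧
        latticePos (Fin.append P₁ P₂) t = r₀) ↔
      (P₁, Q₁) ∈ pathPairs t k₀ r₀ (r₀ + v) ∧
        (P₂, Q₂) ∈ pathPairs u 0 r₁ (r₁ + (j - v)) := by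
  have hinter (hgap₁ : latticeGap P₁ Q₁ t = v) (hu : 0 < u)
      (hgap₂ : ∀ m, 0 < m → m ≤ u → 0 < latticeGap P₂ Q₂ m) :
      latticeInter (Fin.append P₁ P₂) (Fin.append Q₁ Q₂) =
        latticeInter P₁ Q₁ + if v = 0 then 1 else 0 := by
    rw [latticeInter_append _ _ _ _ ht hu (by omega) fun m hm hmu => hgap₂ m hm hmu.le]
    simp only [hgap₁, Nat.cast_eq_zero]
  simp only [pathPairs, mem_filter, mem_univ, true_and, latticePos_append_end,
    latticePos_append_left]
  constructor
  · rintro ⟨⟨hP, hQ, hI⟩, hτ, hr₀⟩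
    obtain ⟨hgap₁, hgap₂⟩ := (lastPassage_append_eq_iff (by unfold latticeGap; omega)).1 hτ
    have hu : 0 < u := Nat.pos_of_ne_zero <| by
      rintro rfl
      simp only [latticePos_zero] at hP hQ
      unfold latticeGap at hgap₁
      omega
    have hI₂ : latticeInter P₂ Q₂ = 0 :=
      (latticeInter_eq_zero_iff P₂ Q₂).2 fun m hm hmu => (hgap₂ m hm hmu.le).ne'
    rw [hinter hgap₁ hu hgap₂] at hI
    unfold latticeGap at hgap₁
    omega
  · rintro ⟨⟨hP₁, hQ₁, hI₁⟩, hP₂, hQ₂, hI₂⟩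
    have hgap₁ : latticeGap P₁ Q₁ t = v := by unfold latticeGap; omega
    have hend₂ : 0 < latticeGap P₂ Q₂ u := by unfold latticeGap; omega
    have hgap₂ := fun m => latticeGap_pos_of_latticeInter_eq_zero hI₂ hend₂ (m := m)
    have hu : 0 < u := Nat.pos_of_ne_zero <| by
      rintro rfl
      rw [latticeGap_zero] at hend₂
      omega
    have hτ := (lastPassage_append_eq_iff (by omega)).2 ⟨hgap₁, hgap₂⟩
    rw [hinter hgap₁ hu hgap₂]
    omega

lemma Mnat_eq_sum_lastPassage {n k k₀ r j v : ℕ} (hvj : v < j)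
    (hk : k = k₀ + if v = 0 then 1 else 0) :
    Mnat n k r (r + j) =
      ∑ p ∈ (antidiagonal n).filter (0 < ·.1), ∑ q ∈ antidiagonal r,
        Mnat p.1 k₀ q.1 (q.1 + v) * Mnat p.2 0 q.2 (q.2 + (j - v)) := by
  have hmaps : Set.MapsTo
      (fun x : (Fin n → Bool) × (Fin n → Bool) =>
        letI τ := lastPassage v x.1 x.2
        ((τ, n - τ), (latticePos x.1 τ, r - latticePos x.1 τ)))
      (pathPairs n k r (r + j))
      (((antidiagonal n).filter (0 < ·.1) ×ˢ antidiagonal r : Finset _) : Set _) := by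
    rintro ⟨P, Q⟩ hx
    simp only [pathPairs, coe_filter, mem_univ, true_and, Set.mem_ofPred_eq] at hx
    obtain ⟨hP, hQ, hI⟩ := hx
    have hv : v < latticeGap P Q n := by unfold latticeGap; omega
    have hτ_pos := lastPassage_pos hv fun hv0 => by simp [hv0] at hk; omega
    have hτ_le := lastPassage_le v P Q
    have hr₀ := hP ▸ latticePos_mono P hτ_le
    simp only [coe_product, coe_filter, mem_coe, HasAntidiagonal.mem_antidiagonal, Set.mem_prod,
      Set.mem_ofPred_eq]
    omega
  rw [Mnat_eq_card, card_eq_sum_card_fiberwise hmaps, sum_product]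
  refine sum_congr rfl fun ⟨t, u⟩ htu => sum_congr rfl fun ⟨r₀, r₁⟩ hr => ?_
  simp only [mem_filter, HasAntidiagonal.mem_antidiagonal] at htu hr
  obtain ⟨rfl, ht⟩ := htu
  subst hr
  rw [Mnat_eq_card, Mnat_eq_card]
  refine card_eq_mul_of_append_mem_iff _ _ _ fun x y => ?_
  rw [mem_filter, ← append_mem_pathPairs_iff ht hvj hk]
  refine and_congr_right fun _ => ?_
  simp only [Prod.mk.injEq]
  constructor
  · rintro ⟨⟨hτ, -⟩, hr₀, -⟩
    rw [hτ] at hr₀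
    exact ⟨hτ, hr₀⟩
  · rintro ⟨hτ, hr₀⟩
    rw [hτ]
    omega

end Cut

section Compositions

open Finset.Nat

lemma sum_antidiagonalTuple_succ {M : Type*} [AddCommMonoid M] (j n : ℕ)
    (f : (Fin (j + 1) → ℕ) → M) :
    ∑ c ∈ antidiagonalTuple (j + 1) n, f c =
      ∑ p ∈ antidiagonal n, ∑ c ∈ antidiagonalTuple j p.2, f (Fin.cons p.1 c) := by
  simp only [Finset.sum, antidiagonalTuple, Multiset.Nat.antidiagonalTuple,
    List.Nat.antidiagonalTuple, Multiset.map_coe, Multiset.sum_coe, List.flatMap_def,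
    List.map_flatten, List.sum_flatten, List.map_map, Function.comp_def]
  rfl

lemma sum_positive_antidiagonalTuple_succ {M : Type*} [AddCommMonoid M] (j n : ℕ)
    (f : (Fin (j + 1) → ℕ) → M) :
    ∑ c ∈ (antidiagonalTuple (j + 1) n).filter (∀ i, 0 < · i), f c =
      ∑ p ∈ (antidiagonal n).filter (0 < ·.1),
        ∑ c ∈ (antidiagonalTuple j p.2).filter (∀ i, 0 < · i), f (Fin.cons p.1 c) := by
  simp only [sum_filter, sum_antidiagonalTuple_succ, Fin.forall_fin_succ, Fin.cons_zero,
    Fin.cons_succ, ite_and, sum_ite_irrel, sum_const_zero]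

variable {R : Type*} [CommSemiring R]

def compositionSum (g : ℕ → ℕ → R) (j n r : ℕ) : R :=
  ∑ c ∈ (antidiagonalTuple j n).filter (∀ i, 0 < · i), ∑ d ∈ antidiagonalTuple j r,
    ∏ i, g (c i) (d i)

lemma sum_mul_prod_eq_sum_mul_compositionSum (F g : ℕ → ℕ → R) (j n r : ℕ) :
    ∑ c ∈ (antidiagonalTuple (j + 1) n).filter (∀ i, 0 < · i),
        ∑ d ∈ antidiagonalTuple (j + 1) r,
          F (c 0) (d 0) * ∏ i : Fin j, g (c i.succ) (d i.succ) =
      ∑ p ∈ (antidiagonal n).filter (0 < ·.1), ∑ q ∈ antidiagonal r,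
        F p.1 q.1 * compositionSum g j p.2 q.2 := by
  simp only [sum_positive_antidiagonalTuple_succ, sum_antidiagonalTuple_succ, Fin.cons_zero,
    Fin.cons_succ, compositionSum, mul_sum]
  exact sum_congr rfl fun p _ => sum_comm

lemma compositionSum_succ (g : ℕ → ℕ → R) (j n r : ℕ) :
    compositionSum g (j + 1) n r =
      ∑ p ∈ (antidiagonal n).filter (0 < ·.1), ∑ q ∈ antidiagonal r,
        g p.1 q.1 * compositionSum g j p.2 q.2 := by
  rw [← sum_mul_prod_eq_sum_mul_compositionSum]
  simp only [compositionSum, Fin.prod_univ_succ]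

lemma compositionSum_one (g : ℕ → ℕ → R) (n r : ℕ) :
    compositionSum g 1 n r = if 0 < n then g n r else 0 := by
  simp only [compositionSum, antidiagonalTuple_one, filter_singleton]
  split_ifs <;> simp_all

end Compositions

section Decomposition

open Finset.Nat

lemma Mnat_zero_of_ne_zero {k r s : ℕ} (hs : s ≠ 0) : Mnat 0 k r s = 0 := by
  simp [Mnat, latticePos_zero, Ne.symm hs]

lemma Mnat_eq_compositionSum {j : ℕ} (hj : 1 ≤ j) (n r : ℕ) :
    Mnat n 0 r (r + j) = compositionSum (fun a b => Mnat a 0 b (b + 1)) j n r := by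
  induction j, hj using Nat.le_induction generalizing n r with
  | base =>
    rw [compositionSum_one]
    split_ifs with hn
    · rfl
    · rw [Nat.eq_zero_of_not_pos hn, Mnat_zero_of_ne_zero (by omega)]
  | succ j hj ih =>
    rw [Mnat_eq_sum_lastPassage (j := j + 1) (v := 1) (k₀ := 0) (by omega) (by simp),
      compositionSum_succ]
    simp only [Nat.add_sub_cancel, ih]

lemma Mnat_decomposition {k j : ℕ} (hk : 1 ≤ k) (hj : 1 ≤ j) (n r : ℕ) :
    Mnat n k r (r + j) =
      ∑ c ∈ (antidiagonalTuple (j + 1) n).filter (fun c => ∀ i, 0 < c i),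
        ∑ d ∈ antidiagonalTuple (j + 1) r,
          Mnat (c 0) (k - 1) (d 0) (d 0) *
            ∏ i : Fin j, Mnat (c i.succ) 0 (d i.succ) (d i.succ + 1) := by
  have hfold := sum_mul_prod_eq_sum_mul_compositionSum (fun a b => Mnat a (k - 1) b b)
    (fun a b => Mnat a 0 b (b + 1)) j n r
  beta_reduce at hfold
  rw [hfold, Mnat_eq_sum_lastPassage (v := 0) (k₀ := k - 1) (by omega) (by simp; omega)]
  simp only [Nat.sub_zero, add_zero, Mnat_eq_compositionSum hj]

end Decomposition

@[norm_cast]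
lemma M_natCast (n k r s : ℕ) : M n k r s = Mnat n k r s := by
  simp [M]

theorem M_decomposition_intersecting_general (k j n r : ℕ) (hk : 1 ≤ k) (hj : 1 ≤ j) :
    M n k r (r + j) =
      ∑ c ∈ (Finset.Nat.antidiagonalTuple (j + 1) n).filter (fun c => ∀ i, 0 < c i),
        ∑ d ∈ Finset.Nat.antidiagonalTuple (j + 1) r,
          N (c 0) ((k : ℤ) - 1) (d 0) *
            ∏ i : Fin j, M (c i.succ) 0 (d i.succ) (d i.succ + 1) := by
  have hk' : (k : ℤ) - 1 = ((k - 1 : ℕ) : ℤ) := by omega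
  simp only [N, hk']
  exact_mod_cast Mnat_decomposition hk hj n r

/-- Decomposition of pairs of paths with `k ≥ 1` intersections:
`M(n,k,r,r+j) = Σ N(n₀,k−1,r₀) · ∏_{i=1}^{j} M(nᵢ,0,rᵢ,rᵢ+1)` over compositions
`n₀+n₁+⋯+n_j = n` into positive parts and `r₀+r₁+⋯+r_j = r` into nonnegative parts. -/
theorem M_decomposition_intersecting (k j n r : ℕ) (hk : 1 ≤ k) (hj : 1 ≤ j)
    (hn : 1 ≤ n) :
    M n k r (r + j) =
      ∑ c ∈ (Finset.Nat.antidiagonalTuple (j + 1) n).filter (fun c => ∀ i, 0 < c i),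
        ∑ d ∈ Finset.Nat.antidiagonalTuple (j + 1) r,
          N (c 0) ((k : ℤ) - 1) (d 0) *
            ∏ i : Fin j, M (c i.succ) 0 (d i.succ) (d i.succ + 1) :=
  M_decomposition_intersecting_general k j n r hk hj
end
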